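/- Let c > 0 and Ω ⊂ ℝ³ open. Let ρ_s ∈ C_c^∞(ℝ³), j_s ∈ C_c^∞(ℝ³; ℝ³) with supp ρ_s ⊂ Ω, supp j_s ⊂ Ω, and div j_s = 0, and let E_s, B_s ∈ C^∞(ℝ³; ℝ³) satisfy div E_s = 4π ρ_s, curl E_s = 0, div B_s = 0, curl B_s = (4π/c) j_s. Let E⁰ : ℝ × ℝ³ → ℝ³ be a C^∞ solution of the wave equation (1/c²)∂_tt E⁰ = Δ_x E⁰ with div_x E⁰ = 0 everywhere, with supp E⁰(t,·) ∩ Ω = ∅ for every t ≤ 0, such that for each x the functions τ ↦ E⁰(τ,x) and all its partial derivatives up to second order are integrable on (−∞, 0] with locally-in-x uniform integrable majorants, and ∂_τ E⁰(τ,x) → 0 as τ → −∞. Let μ ∈ C_c^∞(ℝ × ℝ³) with supp μ(t,·) ⊂ Ω for all t, μ(t,x) = 0 for t ≤ 0, and j_s(x) = E_s(x) ∫_0^∞ μ(t,x) dt for all x. Define, for t ≤ 0, E(t,x) = E⁰(t,x) + E_s(x), B(t,x) = −c ∫_{−∞}^t curl_x E⁰(τ,x) dτ + B_s(x), ρ̄(t,x)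 = ρ_s(x), and j̄(t,x) = ∫_ℝ μ(t − τ, x)(E⁰(τ,x) + E_s(x)) dτ. Then for all t ≤ 0 and x ∈ ℝ³: div_x E(t,x) = 4π ρ̄(t,x), div_x B(t,x) = 0, curl_x E(t,x) = −(1/c) ∂_t B(t,x), and curl_x B(t,x) = (1/c) ∂_t E(t,x) + (4π/c) j̄(t,x). -/

import Mathlib

open MeasureTheory Filter Metric

noncomputable section

/-- Points of physical space `ℝ³`. -/
abbrev V3 : Type := Fin 3 → ℝ

/-- Partial derivative in the `i`-th coordinate direction. -/
def pd (i : Fin 3) (f : V3 → ℝ) (x : V3) : ℝ := fderiv ℝ f x (Pi.single i 1)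

/-- Spatial divergence of a vector field. -/
def div3 (F : V3 → V3) (x : V3) : ℝ := ∑ i, pd i (fun y => F y i) x

/-- Spatial curl of a vector field. -/
def curl3 (F : V3 → V3) (x : V3) : V3 :=
  ![pd 1 (fun y => F y 2) x - pd 2 (fun y => F y 1) x,
    pd 2 (fun y => F y 0) x - pd 0 (fun y => F y 2) x,
    pd 0 (fun y => F y 1) x - pd 1 (fun y => F y 0) x]

/-- Spatial gradient of a scalar field. -/
def grad3 (f : V3 → ℝ) (x : V3) : V3 := fun i => pd i f x

/-- Spatial Laplacian of a scalar field. -/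
def lap3 (f : V3 → ℝ) (x : V3) : ℝ := ∑ i, pd i (fun y => pd i f y) x

/-- Componentwise spatial Laplacian of a vector field. -/
def vlap3 (F : V3 → V3) (x : V3) : V3 := fun k => lap3 (fun y => F y k) x

/-- Time derivative of a time-dependent vector field. -/
def dt (F : ℝ → V3 → V3) (t : ℝ) (x : V3) : V3 := fun i => deriv (fun s => F s x i) t

/-- Second time derivative of a time-dependent vector field. -/
def dt2 (F : ℝ → V3 → V3) (t : ℝ) (x : V3) : V3 :=
  fun i => deriv (fun s => deriv (fun r => F r x i) s) t

section
variable {h : ℝ × V3 → ℝ} (hh : ContDiff ℝ (⊤ : ℕ∞) h)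
include hh

lemma hasFDerivAt_slice (τ : ℝ) (x : V3) :
    HasFDerivAt (fun y => h (τ, y)) ((fderiv ℝ h (τ,x)).comp (ContinuousLinearMap.inr ℝ ℝ V3)) x :=
  ((hh.differentiable (by simp) (τ,x)).hasFDerivAt).comp x (hasFDerivAt_prodMk_right τ x)

lemma pd_slice (i : Fin 3) (τ : ℝ) (x : V3) :
    pd i (fun y => h (τ, y)) x = fderiv ℝ h (τ,x) (0, Pi.single i 1) := by
  rw [pd, (hasFDerivAt_slice hh τ x).fderiv]; rfl

lemma hasDerivAt_slice (τ : ℝ) (x : V3) :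
    HasDerivAt (fun s => h (s, x)) (fderiv ℝ h (τ,x) (1,0)) τ := by
  have := ((hh.differentiable (by simp) (τ,x)).hasFDerivAt).comp τ (hasFDerivAt_prodMk_left (𝕜 := ℝ) τ x)
  exact this.hasDerivAt

lemma deriv_slice (τ : ℝ) (x : V3) :
    deriv (fun s => h (s, x)) τ = fderiv ℝ h (τ,x) (1,0) :=
  (hasDerivAt_slice hh τ x).deriv

lemma contDiff_fderiv : ContDiff ℝ (⊤ : ℕ∞) (fderiv ℝ h) := hh.fderiv_right (by simp)

lemma hasFDerivAt_fderiv_apply (u : ℝ × V3) (q : ℝ × V3) :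
    HasFDerivAt (fun p => fderiv ℝ h p u)
      ((ContinuousLinearMap.apply ℝ ℝ u).comp (fderiv ℝ (fderiv ℝ h) q)) q :=
  ((ContinuousLinearMap.apply ℝ ℝ u).hasFDerivAt).comp q
    (((contDiff_fderiv hh).differentiable (by simp) q).hasFDerivAt)

lemma clairaut (q u v : ℝ × V3) :
    fderiv ℝ (fderiv ℝ h) q u v = fderiv ℝ (fderiv ℝ h) q v u :=
  second_derivative_symmetric (fun y => (hh.differentiable (by simp) y).hasFDerivAt)
    (((contDiff_fderiv hh).differentiable (by simp) q).hasFDerivAt) u v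

lemma pd_fderiv_slice (i : Fin 3) (u : ℝ × V3) (τ : ℝ) (x : V3) :
    pd i (fun y => fderiv ℝ h (τ, y) u) x
      = fderiv ℝ (fderiv ℝ h) (τ,x) (0, Pi.single i 1) u := by
  have h1 : HasFDerivAt (fun y => fderiv ℝ h (τ, y) u)
      ((((ContinuousLinearMap.apply ℝ ℝ u).comp (fderiv ℝ (fderiv ℝ h) (τ, x))).comp
        (ContinuousLinearMap.inr ℝ ℝ V3))) x :=
    (hasFDerivAt_fderiv_apply hh u (τ,x)).comp x (hasFDerivAt_prodMk_right τ x)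
  rw [pd, h1.fderiv]; rfl

lemma pd_pd_slice (i j : Fin 3) (τ : ℝ) (x : V3) :
    pd i (fun y => pd j (fun z => h (τ, z)) y) x
      = fderiv ℝ (fderiv ℝ h) (τ,x) (0, Pi.single i 1) (0, Pi.single j 1) := by
  have : (fun y => pd j (fun z => h (τ, z)) y) = fun y => fderiv ℝ h (τ,y) (0, Pi.single j 1) := by
    funext y; exact pd_slice hh j τ y
  rw [this, pd_fderiv_slice hh]

lemma deriv_deriv_slice (τ : ℝ) (x : V3) :
    deriv (fun s => deriv (fun r => h (r, x)) s) τ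
      = fderiv ℝ (fderiv ℝ h) (τ,x) (1,0) (1,0) := by
  have h0 : (fun s => deriv (fun r => h (r, x)) s) = fun s => fderiv ℝ h (s,x) (1,0) := by
    funext s; exact deriv_slice hh s x
  rw [h0]
  have h1 := (hasFDerivAt_fderiv_apply hh (1,0) (τ,x)).comp τ (hasFDerivAt_prodMk_left (𝕜 := ℝ) τ x)
  exact h1.hasDerivAt.deriv

omit hh in lemma snd_deriv_bound (q u v : ℝ × V3) :
    |fderiv ℝ (fderiv ℝ h) q u v| ≤ ‖iteratedFDeriv ℝ 2 h q‖ * ‖u‖ * ‖v‖ := by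
  have h1 : fderiv ℝ (fderiv ℝ h) q u v = iteratedFDeriv ℝ 2 h q ![u, v] := by
    rw [iteratedFDeriv_two_apply]; rfl
  rw [h1, ← Real.norm_eq_abs]
  have := (iteratedFDeriv ℝ 2 h q).le_opNorm ![u, v]
  simpa [Fin.prod_univ_two, mul_assoc] using this

omit hh in lemma fst_deriv_bound (q u : ℝ × V3) :
    |fderiv ℝ h q u| ≤ ‖iteratedFDeriv ℝ 1 h q‖ * ‖u‖ := by
  have h1 : fderiv ℝ h q u = iteratedFDeriv ℝ 1 h q ![u] := by
    rw [iteratedFDeriv_one_apply]; rfl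
  rw [h1, ← Real.norm_eq_abs]
  simpa [Fin.prod_univ_one] using (iteratedFDeriv ℝ 1 h q).le_opNorm ![u]

lemma cont_fderiv_apply (u : ℝ × V3) : Continuous fun q => fderiv ℝ h q u :=
  ((contDiff_fderiv hh).continuous).clm_apply continuous_const

lemma cont_fderiv2_apply (u v : ℝ × V3) :
    Continuous fun q => fderiv ℝ (fderiv ℝ h) q u v :=
  ((((contDiff_fderiv hh).fderiv_right (m := (⊤ : ℕ∞)) (by simp)).continuous).clm_apply continuous_const).clm_apply
    continuous_const
end

lemma iFD_proj_le {F : ℝ × V3 → V3} (hF : ContDiff ℝ (⊤ : ℕ∞) F) (k : Fin 3) (n : ℕ) (q : ℝ × V3) :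
    ‖iteratedFDeriv ℝ n (fun p => F p k) q‖ ≤ ‖iteratedFDeriv ℝ n F q‖ := by
  have h1 : (fun p => F p k) = (ContinuousLinearMap.proj (R := ℝ) (φ := fun _ : Fin 3 => ℝ) k) ∘ F := rfl
  rw [h1, ContinuousLinearMap.iteratedFDeriv_comp_left _ hF.contDiffAt (by exact_mod_cast le_top)]
  refine le_trans (ContinuousLinearMap.norm_compContinuousMultilinearMap_le _ _) ?_
  have : ‖(ContinuousLinearMap.proj (R := ℝ) (φ := fun _ : Fin 3 => ℝ) k)‖ ≤ 1 := by
    refine ContinuousLinearMap.opNorm_le_bound _ zero_le_one (fun x => ?_)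
    simpa using norm_le_pi_norm x k
  nlinarith [norm_nonneg (iteratedFDeriv ℝ n F q)]

section Aux
def u0 (i : Fin 3) : ℝ × V3 := (0, Pi.single i 1)

lemma norm_u0 (i : Fin 3) : ‖u0 i‖ = 1 := by
  rw [u0, Prod.norm_def]; simp [Pi.norm_single]

lemma norm_ut : ‖((1:ℝ), (0:V3))‖ = 1 := by rw [Prod.norm_def]; simp

variable (E0 : ℝ → V3 → V3)

def eb (k : Fin 3) : ℝ × V3 → ℝ := fun p => E0 p.1 p.2 k
def PP (a b : Fin 3) (τ : ℝ) (y : V3) : ℝ := fderiv ℝ (eb E0 b) (τ, y) (u0 a)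
def QQ (i a b : Fin 3) (τ : ℝ) (y : V3) : ℝ :=
  fderiv ℝ (fderiv ℝ (eb E0 b)) (τ, y) (u0 i) (u0 a)
def AA (a b : Fin 3) (τ : ℝ) (y : V3) : V3 →L[ℝ] ℝ :=
  ((ContinuousLinearMap.apply ℝ ℝ (u0 a)).comp (fderiv ℝ (fderiv ℝ (eb E0 b)) (τ, y))).comp
    (ContinuousLinearMap.inr ℝ ℝ V3)

variable {E0}

lemma AA_single (a b i : Fin 3) (τ : ℝ) (y : V3) :
    AA E0 a b τ y (Pi.single i 1) = QQ E0 i a b τ y := rfl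

variable (hsm : ContDiff ℝ (⊤ : ℕ∞) (fun p : ℝ × V3 => E0 p.1 p.2))
include hsm

lemma ebs (k : Fin 3) : ContDiff ℝ (⊤ : ℕ∞) (eb E0 k) :=
  (ContinuousLinearMap.proj (R := ℝ) (φ := fun _ : Fin 3 => ℝ) k).contDiff.comp hsm

lemma curl_expr (τ : ℝ) (y : V3) :
    curl3 (E0 τ) y = ![PP E0 1 2 τ y - PP E0 2 1 τ y,
      PP E0 2 0 τ y - PP E0 0 2 τ y, PP E0 0 1 τ y - PP E0 1 0 τ y] := by
  funext k
  fin_cases k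
  · show pd 1 (fun z => eb E0 2 (τ, z)) y - pd 2 (fun z => eb E0 1 (τ, z)) y = _
    rw [pd_slice (ebs hsm 2), pd_slice (ebs hsm 1)]; rfl
  · show pd 2 (fun z => eb E0 0 (τ, z)) y - pd 0 (fun z => eb E0 2 (τ, z)) y = _
    rw [pd_slice (ebs hsm 0), pd_slice (ebs hsm 2)]; rfl
  · show pd 0 (fun z => eb E0 1 (τ, z)) y - pd 1 (fun z => eb E0 0 (τ, z)) y = _
    rw [pd_slice (ebs hsm 1), pd_slice (ebs hsm 0)]; rfl

lemma PP_cont (a b : Fin 3) (y : V3) : Continuous fun τ => PP E0 a b τ y :=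
  (cont_fderiv_apply (ebs hsm b) (u0 a)).comp (continuous_id.prodMk continuous_const)

lemma AA_cont (a b : Fin 3) (y : V3) : Continuous fun τ => AA E0 a b τ y := by
  refine Continuous.clm_comp (Continuous.clm_comp continuous_const ?_) continuous_const
  exact (((contDiff_fderiv (ebs hsm b)).fderiv_right (m := (⊤ : ℕ∞)) (by simp)).continuous).comp
    (continuous_id.prodMk continuous_const)

lemma curl3_cont (y : V3) : Continuous fun τ => curl3 (E0 τ) y := by
  have h : (fun τ => curl3 (E0 τ) y) = fun τ => ![PP E0 1 2 τ y - PP E0 2 1 τ y,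
      PP E0 2 0 τ y - PP E0 0 2 τ y, PP E0 0 1 τ y - PP E0 1 0 τ y] := by
    funext τ; exact curl_expr hsm τ y
  rw [h]
  refine continuous_pi fun k => ?_
  fin_cases k <;> simp only [Matrix.cons_val_zero, Matrix.cons_val_one, Matrix.head_cons,
    Matrix.cons_val_two, Matrix.tail_cons] <;>
    exact (PP_cont hsm _ _ y).sub (PP_cont hsm _ _ y)

-- bounds, given a majorant g valid near x₀
variable {g : ℝ → ℝ} {x₀ : V3} {t : ℝ}
variable (hgbd : ∀ τ ≤ (0:ℝ), ∀ x : V3, ‖x - x₀‖ ≤ 1 → ∀ n ≤ 2,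
    ‖iteratedFDeriv ℝ n (fun p : ℝ × V3 => E0 p.1 p.2) (τ, x)‖ ≤ g τ)
include hgbd

lemma PP_bd {τ : ℝ} (hτ : τ ≤ 0) {y : V3} (hy : ‖y - x₀‖ ≤ 1) (a b : Fin 3) :
    |PP E0 a b τ y| ≤ g τ := by
  have h1 := fst_deriv_bound (h := eb E0 b) (τ, y) (u0 a)
  have h2 := iFD_proj_le hsm b 1 (τ, y)
  have h3 := hgbd τ hτ y hy 1 (by norm_num)
  rw [norm_u0] at h1
  calc |PP E0 a b τ y| ≤ ‖iteratedFDeriv ℝ 1 (eb E0 b) (τ,y)‖ * 1 := h1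
    _ ≤ g τ := by rw [mul_one]; exact h2.trans h3

omit hsm in lemma g_nonneg {τ : ℝ} (hτ : τ ≤ 0) : 0 ≤ g τ :=
  le_trans (norm_nonneg _) (hgbd τ hτ x₀ (by simp) 0 (by norm_num))

lemma iFD2_bd {τ : ℝ} (hτ : τ ≤ 0) {y : V3} (hy : ‖y - x₀‖ ≤ 1) (b : Fin 3) :
    ‖iteratedFDeriv ℝ 2 (eb E0 b) (τ,y)‖ ≤ g τ :=
  (iFD_proj_le hsm b 2 (τ, y)).trans (hgbd τ hτ y hy 2 le_rfl)

lemma dtt_bd {τ : ℝ} (hτ : τ ≤ 0) {y : V3} (hy : ‖y - x₀‖ ≤ 1) (b : Fin 3) :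
    |fderiv ℝ (fderiv ℝ (eb E0 b)) (τ, y) (1, 0) (1, 0)| ≤ g τ := by
  have h1 := snd_deriv_bound (h := eb E0 b) (τ, y) ((1:ℝ), (0:V3)) ((1:ℝ), (0:V3))
  rw [norm_ut, mul_one, mul_one] at h1
  exact h1.trans (iFD2_bd hsm hgbd hτ hy b)

lemma AA_bd {τ : ℝ} (hτ : τ ≤ 0) {y : V3} (hy : ‖y - x₀‖ ≤ 1) (a b : Fin 3) :
    ‖AA E0 a b τ y‖ ≤ g τ := by
  refine ContinuousLinearMap.opNorm_le_bound _ (g_nonneg hgbd hτ) fun v => ?_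
  have h1 := snd_deriv_bound (h := eb E0 b) (τ, y) ((0:ℝ), v) (u0 a)
  rw [norm_u0, mul_one] at h1
  have h2 : ‖((0:ℝ), v)‖ = ‖v‖ := by rw [Prod.norm_def]; simp
  rw [h2] at h1
  have h3 := iFD2_bd hsm hgbd hτ hy b
  calc ‖AA E0 a b τ y v‖ = |fderiv ℝ (fderiv ℝ (eb E0 b)) (τ, y) ((0:ℝ), v) (u0 a)| := rfl
    _ ≤ ‖iteratedFDeriv ℝ 2 (eb E0 b) (τ,y)‖ * ‖v‖ := h1
    _ ≤ g τ * ‖v‖ := by nlinarith [norm_nonneg v]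
end Aux

section Aux2
open MeasureTheory Filter Metric
variable {E0 : ℝ → V3 → V3}
variable (hsm : ContDiff ℝ (⊤ : ℕ∞) (fun p : ℝ × V3 => E0 p.1 p.2))
variable (hint : ∀ x₀ : V3, ∃ g : ℝ → ℝ, IntegrableOn g (Set.Iic 0) ∧
      ∀ τ ≤ (0:ℝ), ∀ x : V3, ‖x - x₀‖ ≤ 1 → ∀ n ≤ 2,
        ‖iteratedFDeriv ℝ n (fun p : ℝ × V3 => E0 p.1 p.2) (τ, x)‖ ≤ g τ)
include hsm hint

lemma int_curl (x : V3) (s : ℝ) : IntegrableOn (fun τ => curl3 (E0 τ) x) (Set.Iic s) := by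
  obtain ⟨g, hgint, hgbd⟩ := hint x
  have hc := curl3_cont hsm x
  have h0 : IntegrableOn (fun τ => curl3 (E0 τ) x) (Set.Iic 0) := by
    refine Integrable.mono' (hgint.const_mul 2) hc.aestronglyMeasurable.restrict ?_
    rw [ae_restrict_iff' measurableSet_Iic]
    refine ae_of_all _ fun τ hτ => ?_
    rw [Set.mem_Iic] at hτ
    have hg0 := g_nonneg hgbd hτ
    refine (pi_norm_le_iff_of_nonneg (by linarith)).mpr fun k => ?_
    rw [curl_expr hsm τ x, Real.norm_eq_abs]
    have hb : ∀ a b a' b' : Fin 3, |PP E0 a b τ x - PP E0 a' b' τ x| ≤ 2 * g τ := by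
      intro a b a' b'
      have h1 := PP_bd hsm hgbd hτ (x₀ := x) (y := x) (by simp) a b
      have h2 := PP_bd hsm hgbd hτ (x₀ := x) (y := x) (by simp) a' b'
      calc |PP E0 a b τ x - PP E0 a' b' τ x| ≤ |PP E0 a b τ x| + |PP E0 a' b' τ x| :=
        abs_sub _ _
        _ ≤ 2 * g τ := by linarith
    fin_cases k <;> simp only [Matrix.cons_val_zero, Matrix.cons_val_one, Matrix.head_cons,
      Matrix.cons_val_two, Matrix.tail_cons] <;> exact hb _ _ _ _
  rcases le_or_gt s 0 with hs | hs
  · exact h0.mono_set (Set.Iic_subset_Iic.mpr hs)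
  · have h1 : IntegrableOn (fun τ => curl3 (E0 τ) x) (Set.Ioc 0 s) := hc.integrableOn_Ioc
    refine (h0.union h1).mono_set fun τ hτ => ?_
    rw [Set.mem_Iic] at hτ
    rcases le_or_gt τ 0 with h | h
    · exact Or.inl h
    · exact Or.inr ⟨h, hτ⟩

lemma int_curlk (x : V3) (s : ℝ) (k : Fin 3) :
    IntegrableOn (fun τ => curl3 (E0 τ) x k) (Set.Iic s) :=
  (ContinuousLinearMap.proj (R := ℝ) (φ := fun _ : Fin 3 => ℝ) k).integrable_comp
    (int_curl hsm hint x s)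

lemma Gcomp (x : V3) (s : ℝ) (k : Fin 3) :
    (∫ τ in Set.Iic s, curl3 (E0 τ) x) k = ∫ τ in Set.Iic s, curl3 (E0 τ) x k := by
  have := (ContinuousLinearMap.proj (R := ℝ) (φ := fun _ : Fin 3 => ℝ) k).integral_comp_comm
    (int_curl hsm hint x s)
  simpa using this.symm

omit hint in lemma PP_hasFDerivAt (a b : Fin 3) (τ : ℝ) (x : V3) :
    HasFDerivAt (fun y => PP E0 a b τ y) (AA E0 a b τ x) x :=
  (hasFDerivAt_fderiv_apply (ebs hsm b) (u0 a) (τ, x)).comp x (hasFDerivAt_prodMk_right τ x)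

lemma master {t : ℝ} (ht : t ≤ 0) (a b a' b' : Fin 3) (x₀ : V3) :
    HasFDerivAt (fun x => ∫ τ in Set.Iic t, (PP E0 a b τ x - PP E0 a' b' τ x))
      (∫ τ in Set.Iic t, (AA E0 a b τ x₀ - AA E0 a' b' τ x₀)) x₀ ∧
    Integrable (fun τ => AA E0 a b τ x₀ - AA E0 a' b' τ x₀)
      (volume.restrict (Set.Iic t)) := by
  obtain ⟨g, hgint, hgbd⟩ := hint x₀
  have hgt : IntegrableOn g (Set.Iic t) := hgint.mono_set (Set.Iic_subset_Iic.mpr ht)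
  have hAcont : Continuous fun τ => AA E0 a b τ x₀ - AA E0 a' b' τ x₀ :=
    (AA_cont hsm a b x₀).sub (AA_cont hsm a' b' x₀)
  have hbd : ∀ᵐ τ ∂(volume.restrict (Set.Iic t)), ∀ x ∈ ball x₀ 1,
      ‖AA E0 a b τ x - AA E0 a' b' τ x‖ ≤ 2 * g τ := by
    rw [ae_restrict_iff' measurableSet_Iic]
    refine ae_of_all _ fun τ hτ x hx => ?_
    rw [Set.mem_Iic] at hτ
    rw [mem_ball_iff_norm] at hx
    have h1 := AA_bd hsm hgbd (hτ.trans ht) (le_of_lt hx) a b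
    have h2 := AA_bd hsm hgbd (hτ.trans ht) (le_of_lt hx) a' b'
    calc ‖AA E0 a b τ x - AA E0 a' b' τ x‖ ≤ ‖AA E0 a b τ x‖ + ‖AA E0 a' b' τ x‖ :=
      norm_sub_le _ _
      _ ≤ 2 * g τ := by linarith
  have hA : Integrable (fun τ => AA E0 a b τ x₀ - AA E0 a' b' τ x₀)
      (volume.restrict (Set.Iic t)) := by
    refine Integrable.mono' (hgt.const_mul 2) hAcont.aestronglyMeasurable.restrict ?_
    rw [ae_restrict_iff' measurableSet_Iic]
    refine ae_of_all _ fun τ hτ => ?_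
    rw [Set.mem_Iic] at hτ
    have h1 := AA_bd hsm hgbd (hτ.trans ht) (y := x₀) (by simp) a b
    have h2 := AA_bd hsm hgbd (hτ.trans ht) (y := x₀) (by simp) a' b'
    calc ‖AA E0 a b τ x₀ - AA E0 a' b' τ x₀‖ ≤ _ := norm_sub_le _ _
      _ ≤ 2 * g τ := by linarith
  refine ⟨?_, hA⟩
  refine hasFDerivAt_integral_of_dominated_of_fderiv_le (F := fun x τ => PP E0 a b τ x - PP E0 a' b' τ x)
    (F' := fun x τ => AA E0 a b τ x - AA E0 a' b' τ x) (bound := fun τ => 2 * g τ)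
    (ball_mem_nhds x₀ one_pos) ?_ ?_ ?_ hbd (hgt.const_mul 2) ?_
  · exact Eventually.of_forall fun x =>
      ((PP_cont hsm a b x).sub (PP_cont hsm a' b' x)).aestronglyMeasurable.restrict
  · refine Integrable.mono' (hgt.const_mul 2)
      ((PP_cont hsm a b x₀).sub (PP_cont hsm a' b' x₀)).aestronglyMeasurable.restrict ?_
    rw [ae_restrict_iff' measurableSet_Iic]
    refine ae_of_all _ fun τ hτ => ?_
    rw [Set.mem_Iic] at hτ
    have h1 := PP_bd hsm hgbd (hτ.trans ht) (y := x₀) (by simp) a b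
    have h2 := PP_bd hsm hgbd (hτ.trans ht) (y := x₀) (by simp) a' b'
    calc ‖PP E0 a b τ x₀ - PP E0 a' b' τ x₀‖ ≤ _ := norm_sub_le _ _
      _ ≤ 2 * g τ := by rw [Real.norm_eq_abs, Real.norm_eq_abs]; linarith
  · exact hAcont.aestronglyMeasurable.restrict
  · refine ae_of_all _ fun τ x _ => ?_
    exact (PP_hasFDerivAt hsm a b τ x).sub (PP_hasFDerivAt hsm a' b' τ x)

lemma pd_int {t : ℝ} (ht : t ≤ 0) (a b a' b' i : Fin 3) (x₀ : V3) :
    pd i (fun x => ∫ τ in Set.Iic t, (PP E0 a b τ x - PP E0 a' b' τ x)) x₀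
      = ∫ τ in Set.Iic t, (QQ E0 i a b τ x₀ - QQ E0 i a' b' τ x₀) := by
  obtain ⟨hD, hA⟩ := master hsm hint ht a b a' b' x₀
  rw [pd, hD.fderiv, ContinuousLinearMap.integral_apply hA]
  refine integral_congr_ae (Filter.Eventually.of_forall fun τ => ?_)
  show (AA E0 a b τ x₀ - AA E0 a' b' τ x₀) (Pi.single i 1) = _
  rw [ContinuousLinearMap.sub_apply, AA_single, AA_single]

lemma int_QQ {t : ℝ} (ht : t ≤ 0) (a b a' b' i : Fin 3) (x₀ : V3) :
    Integrable (fun τ => QQ E0 i a b τ x₀ - QQ E0 i a' b' τ x₀)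
      (volume.restrict (Set.Iic t)) := by
  have hA := (master hsm hint ht a b a' b' x₀).2
  have := (ContinuousLinearMap.apply ℝ ℝ (Pi.single i 1 : V3)).integrable_comp hA
  have he : (fun τ => (ContinuousLinearMap.apply ℝ ℝ (Pi.single i 1 : V3))
      ((fun τ => AA E0 a b τ x₀ - AA E0 a' b' τ x₀) τ))
      = fun τ => QQ E0 i a b τ x₀ - QQ E0 i a' b' τ x₀ := by
    funext τ
    simp only [ContinuousLinearMap.apply_apply, ContinuousLinearMap.sub_apply, AA_single]
  rwa [he] at this

lemma ftc (hdt0 : ∀ x, Filter.Tendsto (fun τ => dt E0 τ x) atBot (nhds 0))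
    {t : ℝ} (ht : t ≤ 0) (x : V3) (k : Fin 3) :
    ∫ τ in Set.Iic t, dt2 E0 τ x k = dt E0 t x k := by
  obtain ⟨g, hgint, hgbd⟩ := hint x
  have hfeq : ∀ τ, dt E0 τ x k = fderiv ℝ (eb E0 k) (τ, x) (1, 0) := fun τ =>
    deriv_slice (ebs hsm k) τ x
  have hf'eq : ∀ τ, dt2 E0 τ x k = fderiv ℝ (fderiv ℝ (eb E0 k)) (τ, x) (1, 0) (1, 0) :=
    fun τ => deriv_deriv_slice (ebs hsm k) τ x
  have hcont : Continuous fun s => fderiv ℝ (eb E0 k) (s, x) (1, 0) :=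
    (cont_fderiv_apply (ebs hsm k) (1, 0)).comp (continuous_id.prodMk continuous_const)
  have hderiv : ∀ τ : ℝ, HasDerivAt (fun s => fderiv ℝ (eb E0 k) (s, x) (1, 0))
      (fderiv ℝ (fderiv ℝ (eb E0 k)) (τ, x) (1, 0) (1, 0)) τ := by
    intro τ
    have h1 := (hasFDerivAt_fderiv_apply (ebs hsm k) (1, 0) (τ, x)).comp τ
      (hasFDerivAt_prodMk_left (𝕜 := ℝ) τ x)
    exact h1.hasDerivAt
  have hint' : IntegrableOn (fun τ => fderiv ℝ (fderiv ℝ (eb E0 k)) (τ, x) (1, 0) (1, 0))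
      (Set.Iic t) := by
    refine Integrable.mono' (hgint.mono_set (Set.Iic_subset_Iic.mpr ht))
      (((cont_fderiv2_apply (ebs hsm k) (1, 0) (1, 0)).comp
        (continuous_id.prodMk continuous_const)).aestronglyMeasurable.restrict) ?_
    rw [ae_restrict_iff' measurableSet_Iic]
    refine ae_of_all _ fun τ hτ => ?_
    rw [Set.mem_Iic] at hτ
    simpa [Real.norm_eq_abs] using dtt_bd hsm hgbd (hτ.trans ht) (y := x) (by simp) k
  have htend : Tendsto (fun s => fderiv ℝ (eb E0 k) (s, x) (1, 0)) atBot (nhds 0) := by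
    have h1 : Tendsto (fun τ => dt E0 τ x k) atBot (nhds ((0 : V3) k)) :=
      ((continuous_apply k).tendsto _).comp (hdt0 x)
    have h2 : (fun τ => dt E0 τ x k) = fun s => fderiv ℝ (eb E0 k) (s, x) (1, 0) :=
      funext hfeq
    rw [h2] at h1
    simpa using h1
  have hmain := integral_Iic_of_hasDerivAt_of_tendsto hcont.continuousWithinAt
    (fun τ _ => hderiv τ) hint' htend
  calc ∫ τ in Set.Iic t, dt2 E0 τ x k
      = ∫ τ in Set.Iic t, fderiv ℝ (fderiv ℝ (eb E0 k)) (τ, x) (1, 0) (1, 0) := by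
        simp only [hf'eq]
    _ = fderiv ℝ (eb E0 k) (t, x) (1, 0) - 0 := hmain
    _ = dt E0 t x k := by rw [sub_zero, hfeq]
end Aux2

section Aux3
open MeasureTheory Filter Metric

lemma pd_add {f g : V3 → ℝ} {x : V3} (i : Fin 3) (hf : DifferentiableAt ℝ f x)
    (hg : DifferentiableAt ℝ g x) :
    pd i (fun y => f y + g y) x = pd i f x + pd i g x := by
  simp [pd, fderiv_fun_add hf hg]

lemma pd_sub {f g : V3 → ℝ} {x : V3} (i : Fin 3) (hf : DifferentiableAt ℝ f x)
    (hg : DifferentiableAt ℝ g x) :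
    pd i (fun y => f y - g y) x = pd i f x - pd i g x := by
  simp [pd, fderiv_fun_sub hf hg]

lemma pd_const_mul {g : V3 → ℝ} {x : V3} (i : Fin 3) (c : ℝ) (hg : DifferentiableAt ℝ g x) :
    pd i (fun y => c * g y) x = c * pd i g x := by
  simp [pd, fderiv_const_mul hg c]

lemma pd_const {x : V3} (i : Fin 3) (a : ℝ) : pd i (fun _ => a) x = 0 := by
  simp [pd]

variable {E0 : ℝ → V3 → V3} (hsm : ContDiff ℝ (⊤ : ℕ∞) (fun p : ℝ × V3 => E0 p.1 p.2))
include hsm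

lemma QQ_symm (i a b : Fin 3) (τ : ℝ) (y : V3) : QQ E0 i a b τ y = QQ E0 a i b τ y :=
  clairaut (ebs hsm b) (τ, y) (u0 i) (u0 a)

lemma pd_E0comp (a b : Fin 3) (τ : ℝ) (y : V3) :
    pd a (fun z => E0 τ z b) y = PP E0 a b τ y :=
  pd_slice (ebs hsm b) a τ y

lemma pd_PP (i a b : Fin 3) (τ : ℝ) (x : V3) :
    pd i (fun y => PP E0 a b τ y) x = QQ E0 i a b τ x :=
  pd_fderiv_slice (ebs hsm b) i (u0 a) τ x

lemma pd_pd_E0 (i a b : Fin 3) (τ : ℝ) (x : V3) :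
    pd i (fun y => pd a (fun z => E0 τ z b) y) x = QQ E0 i a b τ x :=
  pd_pd_slice (ebs hsm b) i a τ x

lemma lapQQ (k : Fin 3) (τ : ℝ) (x : V3) :
    vlap3 (E0 τ) x k = QQ E0 0 0 k τ x + QQ E0 1 1 k τ x + QQ E0 2 2 k τ x := by
  show lap3 (fun y => E0 τ y k) x = _
  rw [lap3, Fin.sum_univ_three, pd_pd_E0 hsm 0 0 k τ x, pd_pd_E0 hsm 1 1 k τ x,
    pd_pd_E0 hsm 2 2 k τ x]

lemma divQQ (hdiv : ∀ τ y, div3 (E0 τ) y = 0) (i : Fin 3) (τ : ℝ) (x : V3) :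
    QQ E0 i 0 0 τ x + QQ E0 i 1 1 τ x + QQ E0 i 2 2 τ x = 0 := by
  have h0 : (fun y => PP E0 0 0 τ y + (PP E0 1 1 τ y + PP E0 2 2 τ y)) = fun _ => (0:ℝ) := by
    funext y
    have h := hdiv τ y
    rw [div3, Fin.sum_univ_three, pd_E0comp hsm 0 0 τ y, pd_E0comp hsm 1 1 τ y,
      pd_E0comp hsm 2 2 τ y] at h
    linarith
  have hd : ∀ a b : Fin 3, DifferentiableAt ℝ (fun y => PP E0 a b τ y) x := fun a b =>
    (PP_hasFDerivAt hsm a b τ x).differentiableAt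
  have h1 : pd i (fun y => PP E0 0 0 τ y + (PP E0 1 1 τ y + PP E0 2 2 τ y)) x
      = QQ E0 i 0 0 τ x + (QQ E0 i 1 1 τ x + QQ E0 i 2 2 τ x) := by
    rw [pd_add i (hd 0 0) ((hd 1 1).fun_add (hd 2 2)), pd_add i (hd 1 1) (hd 2 2),
      pd_PP hsm, pd_PP hsm, pd_PP hsm]
  rw [h0, pd_const] at h1
  linarith
end Aux3

/-- (Proposition 3.5) The superposition of an incoming vacuum wave `E⁰`
supported away from the medium and the stationary fields `(E_s, B_s)` of the undisturbed
medium solves Maxwell's macroscopic equations for a non-magnetic isotropic linear dielectric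
medium for all times `t ≤ 0`. -/
theorem statement_6
    (c : ℝ) (hc : 0 < c) (Ω : Set V3) (hΩ : IsOpen Ω)
    (ρs : V3 → ℝ) (js Es Bs : V3 → V3)
    (hρs : ContDiff ℝ (⊤ : ℕ∞) ρs) (hρsc : HasCompactSupport ρs) (hρsΩ : tsupport ρs ⊆ Ω)
    (hjs : ContDiff ℝ (⊤ : ℕ∞) js) (hjsc : HasCompactSupport js) (hjsΩ : tsupport js ⊆ Ω)
    (hjsdiv : ∀ x, div3 js x = 0)
    (hEs : ContDiff ℝ (⊤ : ℕ∞) Es) (hBs : ContDiff ℝ (⊤ : ℕ∞) Bs)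
    (hEsdiv : ∀ x, div3 Es x = 4 * Real.pi * ρs x)
    (hEscurl : ∀ x, curl3 Es x = 0)
    (hBsdiv : ∀ x, div3 Bs x = 0)
    (hBscurl : ∀ x, curl3 Bs x = ((4 * Real.pi)/c) • js x)
    (E0 : ℝ → V3 → V3)
    (hE0smooth : ContDiff ℝ (⊤ : ℕ∞) (fun p : ℝ × V3 => E0 p.1 p.2))
    (hE0wave : ∀ t x, (1/c^2) • dt2 E0 t x = vlap3 (E0 t) x)
    (hE0div : ∀ t x, div3 (E0 t) x = 0)
    (hE0supp : ∀ t ≤ (0:ℝ), Disjoint (tsupport (E0 t)) Ω)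
    (hE0int : ∀ x₀ : V3, ∃ g : ℝ → ℝ, IntegrableOn g (Set.Iic 0) ∧
      ∀ τ ≤ (0:ℝ), ∀ x : V3, ‖x - x₀‖ ≤ 1 → ∀ n ≤ 2,
        ‖iteratedFDeriv ℝ n (fun p : ℝ × V3 => E0 p.1 p.2) (τ, x)‖ ≤ g τ)
    (hE0dt : ∀ x, Tendsto (fun τ => dt E0 τ x) atBot (nhds 0))
    (μ : ℝ × V3 → ℝ) (hμ : ContDiff ℝ (⊤ : ℕ∞) μ) (hμc : HasCompactSupport μ)
    (hμΩ : ∀ t, tsupport (fun x => μ (t, x)) ⊆ Ω)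
    (hμ0 : ∀ t ≤ (0:ℝ), ∀ x, μ (t, x) = 0)
    (hjsμ : ∀ x, js x = (∫ t in Set.Ioi (0:ℝ), μ (t, x)) • Es x)
    (E B : ℝ → V3 → V3) (ρa : ℝ → V3 → ℝ) (ja : ℝ → V3 → V3)
    (hEdef : ∀ t x, E t x = E0 t x + Es x)
    (hBdef : ∀ t x, B t x = Bs x - c • ∫ τ in Set.Iic t, curl3 (E0 τ) x)
    (hρadef : ∀ t x, ρa t x = ρs x)
    (hjadef : ∀ t x, ja t x = ∫ τ, μ (t - τ, x) • (E0 τ x + Es x)) :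
    ∀ t ≤ (0:ℝ), ∀ x,
      div3 (E t) x = 4 * Real.pi * ρa t x ∧
      div3 (B t) x = 0 ∧
      curl3 (E t) x = -(1/c) • dt B t x ∧
      curl3 (B t) x = (1/c) • dt E t x + ((4 * Real.pi)/c) • ja t x := by
  intro t ht x
  have hsm := hE0smooth
  have hintm := hE0int
  -- differentiability of components
  have hEsk : ∀ k : Fin 3, Differentiable ℝ (fun y => Es y k) := fun k =>
    ((ContinuousLinearMap.proj (R := ℝ) (φ := fun _ : Fin 3 => ℝ) k).contDiff.comp
      hEs).differentiable (by simp)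
  have hBsk : ∀ k : Fin 3, Differentiable ℝ (fun y => Bs y k) := fun k =>
    ((ContinuousLinearMap.proj (R := ℝ) (φ := fun _ : Fin 3 => ℝ) k).contDiff.comp
      hBs).differentiable (by simp)
  have hE0k : ∀ (s : ℝ) (k : Fin 3), Differentiable ℝ (fun y => E0 s y k) := fun s k y =>
    (hasFDerivAt_slice (ebs hsm k) s y).differentiableAt
  have hEcomp : ∀ (s : ℝ) (i : Fin 3), (fun y => E s y i) = fun y => E0 s y i + Es y i := by
    intro s i; funext y; rw [hEdef]; rfl
  -- component form of B
  have hBcomp : ∀ (s : ℝ) (k : Fin 3) (y : V3),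
      B s y k = Bs y k - c * ∫ τ in Set.Iic s, curl3 (E0 τ) y k := by
    intro s k y
    rw [hBdef]
    simp only [Pi.sub_apply, Pi.smul_apply, smul_eq_mul, Gcomp hsm hintm y s k]
  -- time derivative of E
  have hdtE : ∀ k : Fin 3, dt E t x k = dt E0 t x k := by
    intro k
    show deriv (fun s => E s x k) t = deriv (fun s => E0 s x k) t
    have h1 : (fun s => E s x k) = fun s => E0 s x k + Es x k := by
      funext s; rw [hEdef]; rfl
    rw [h1, deriv_add_const]
  -- ja = js for t ≤ 0
  have hja : ja t x = js x := by
    rw [hjadef]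
    have h1 : (fun τ => μ (t - τ, x) • (E0 τ x + Es x)) = fun τ => μ (t - τ, x) • Es x := by
      funext τ
      by_cases hμz : μ (t - τ, x) = 0
      · rw [hμz]; simp
      · have hτt : τ < t := by
          by_contra hcon
          exact hμz (hμ0 (t - τ) (by linarith [not_lt.mp hcon]) x)
        have hxΩ : x ∈ Ω := hμΩ (t - τ) (subset_tsupport _ hμz)
        have hE00 : E0 τ x = 0 := by
          have hdisj := hE0supp τ (le_of_lt (lt_of_lt_of_le hτt ht))
          have : x ∉ tsupport (E0 τ) := fun hmem => hdisj.ne_of_mem hmem hxΩ rfl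
          exact image_eq_zero_of_notMem_tsupport this
        rw [hE00, zero_add]
    rw [h1]
    rw [integral_smul_const]
    have h2 : ∫ τ, μ (t - τ, x) = ∫ s, μ (s, x) := by
      have h3 : ∫ τ, μ (t - τ, x) = ∫ τ, μ (t + τ, x) := by
        rw [← integral_neg_eq_self (fun τ => μ (t + τ, x)) volume]
        simp [sub_eq_add_neg]
      rw [h3, integral_add_left_eq_self (μ := volume) (fun s => μ (s, x)) t]
    rw [h2, ← setIntegral_eq_integral_of_forall_compl_eq_zero
      (fun s hs => hμ0 s (le_of_not_gt (fun h => hs (Set.mem_Ioi.mpr h))) x), ← hjsμ x]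
  -- Goal 1 : Gauss law for E
  have hdivE : div3 (E t) x = 4 * Real.pi * ρa t x := by
    rw [div3, Fin.sum_univ_three]
    have h1 : ∀ i : Fin 3, pd i (fun y => E t y i) x
        = pd i (fun y => E0 t y i) x + pd i (fun y => Es y i) x := by
      intro i; rw [hEcomp t i]; exact pd_add i (hE0k t i x) (hEsk i x)
    rw [h1 0, h1 1, h1 2]
    have h2 := hE0div t x
    rw [div3, Fin.sum_univ_three] at h2
    have h3 := hEsdiv x
    rw [div3, Fin.sum_univ_three] at h3
    rw [hρadef]
    linarith
  -- key pd computation for components of B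
  have hpdB : ∀ (i a b a' b' k : Fin 3),
      (∀ τ y, curl3 (E0 τ) y k = PP E0 a b τ y - PP E0 a' b' τ y) →
      pd i (fun y => B t y k) x = pd i (fun y => Bs y k) x
        - c * ∫ τ in Set.Iic t, (QQ E0 i a b τ x - QQ E0 i a' b' τ x) := by
    intro i a b a' b' k hk
    have hfun : (fun y => B t y k)
        = fun y => Bs y k - c * ∫ τ in Set.Iic t, (PP E0 a b τ y - PP E0 a' b' τ y) := by
      funext y
      rw [hBcomp t k y]
      simp only [hk]
    rw [hfun, pd_sub i (hBsk k x)
      (((master hsm hintm ht a b a' b' x).1.differentiableAt).const_mul c),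
      pd_const_mul i c ((master hsm hintm ht a b a' b' x).1.differentiableAt),
      pd_int hsm hintm ht a b a' b' i x]
  -- curl components of E0 in PP form
  have hck0 : ∀ τ y, curl3 (E0 τ) y 0 = PP E0 1 2 τ y - PP E0 2 1 τ y := by
    intro τ y; rw [curl_expr hsm τ y]; rfl
  have hck1 : ∀ τ y, curl3 (E0 τ) y 1 = PP E0 2 0 τ y - PP E0 0 2 τ y := by
    intro τ y; rw [curl_expr hsm τ y]; rfl
  have hck2 : ∀ τ y, curl3 (E0 τ) y 2 = PP E0 0 1 τ y - PP E0 1 0 τ y := by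
    intro τ y; rw [curl_expr hsm τ y]; rfl
  -- Goal 2 : div B = 0
  have hdivB : div3 (B t) x = 0 := by
    rw [div3, Fin.sum_univ_three]
    rw [hpdB 0 1 2 2 1 0 hck0, hpdB 1 2 0 0 2 1 hck1, hpdB 2 0 1 1 0 2 hck2]
    have hBs0 := hBsdiv x
    rw [div3, Fin.sum_univ_three] at hBs0
    have e1 := int_QQ hsm hintm ht 1 2 2 1 0 x
    have e2 := int_QQ hsm hintm ht 2 0 0 2 1 x
    have e3 := int_QQ hsm hintm ht 0 1 1 0 2 x
    have hK : (∫ τ in Set.Iic t, (QQ E0 0 1 2 τ x - QQ E0 0 2 1 τ x))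
        + ((∫ τ in Set.Iic t, (QQ E0 1 2 0 τ x - QQ E0 1 0 2 τ x))
          + (∫ τ in Set.Iic t, (QQ E0 2 0 1 τ x - QQ E0 2 1 0 τ x))) = 0 := by
      have e23 : Integrable (fun τ => (QQ E0 1 2 0 τ x - QQ E0 1 0 2 τ x)
          + (QQ E0 2 0 1 τ x - QQ E0 2 1 0 τ x)) (volume.restrict (Set.Iic t)) := by
        exact e2.add e3
      have h23 : (∫ τ in Set.Iic t, (QQ E0 1 2 0 τ x - QQ E0 1 0 2 τ x))
          + (∫ τ in Set.Iic t, (QQ E0 2 0 1 τ x - QQ E0 2 1 0 τ x))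
          = ∫ τ in Set.Iic t, ((QQ E0 1 2 0 τ x - QQ E0 1 0 2 τ x)
            + (QQ E0 2 0 1 τ x - QQ E0 2 1 0 τ x)) := by
        exact (integral_add e2 e3).symm
      have h123 : (∫ τ in Set.Iic t, (QQ E0 0 1 2 τ x - QQ E0 0 2 1 τ x))
          + (∫ τ in Set.Iic t, ((QQ E0 1 2 0 τ x - QQ E0 1 0 2 τ x)
            + (QQ E0 2 0 1 τ x - QQ E0 2 1 0 τ x)))
          = ∫ τ in Set.Iic t, ((QQ E0 0 1 2 τ x - QQ E0 0 2 1 τ x)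
            + ((QQ E0 1 2 0 τ x - QQ E0 1 0 2 τ x) + (QQ E0 2 0 1 τ x - QQ E0 2 1 0 τ x))) := by
        exact (integral_add e1 e23).symm
      rw [h23, h123]
      refine Eq.trans (integral_congr_ae (Filter.Eventually.of_forall fun τ => ?_))
        (integral_zero _ _)
      show (QQ E0 0 1 2 τ x - QQ E0 0 2 1 τ x)
          + ((QQ E0 1 2 0 τ x - QQ E0 1 0 2 τ x) + (QQ E0 2 0 1 τ x - QQ E0 2 1 0 τ x)) = (0:ℝ)
      have s1 := QQ_symm hsm 0 1 2 τ x
      have s2 := QQ_symm hsm 1 2 0 τ x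
      have s3 := QQ_symm hsm 2 0 1 τ x
      linarith
    have hK2 : c * (∫ τ in Set.Iic t, (QQ E0 0 1 2 τ x - QQ E0 0 2 1 τ x))
        + (c * (∫ τ in Set.Iic t, (QQ E0 1 2 0 τ x - QQ E0 1 0 2 τ x))
          + c * (∫ τ in Set.Iic t, (QQ E0 2 0 1 τ x - QQ E0 2 1 0 τ x))) = 0 := by
      have h5 : c * ((∫ τ in Set.Iic t, (QQ E0 0 1 2 τ x - QQ E0 0 2 1 τ x))
          + ((∫ τ in Set.Iic t, (QQ E0 1 2 0 τ x - QQ E0 1 0 2 τ x))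
            + (∫ τ in Set.Iic t, (QQ E0 2 0 1 τ x - QQ E0 2 1 0 τ x)))) = 0 := by
        rw [hK, mul_zero]
      rw [mul_add, mul_add] at h5
      linarith
    linarith
  -- time derivative of B
  have hdtB : ∀ k : Fin 3, dt B t x k = -(c * curl3 (E0 t) x k) := by
    intro k
    have hcc : Continuous fun τ => curl3 (E0 τ) x k :=
      (continuous_apply k).comp (curl3_cont hsm x)
    have hK : ∀ s : ℝ, ∫ τ in Set.Iic s, curl3 (E0 τ) x k
        = (∫ τ in Set.Iic t, curl3 (E0 τ) x k) + ∫ τ in t..s, curl3 (E0 τ) x k := by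
      intro s
      rw [← intervalIntegral.integral_Iic_sub_Iic (int_curlk hsm hintm x t k)
        (int_curlk hsm hintm x s k)]
      ring
    have hfun : (fun s => B s x k) = fun s => Bs x k
        - c * ((∫ τ in Set.Iic t, curl3 (E0 τ) x k) + ∫ τ in t..s, curl3 (E0 τ) x k) := by
      funext s; rw [hBcomp s k x, hK s]
    have hI : HasDerivAt (fun s => ∫ τ in t..s, curl3 (E0 τ) x k) (curl3 (E0 t) x k) t :=
      intervalIntegral.integral_hasDerivAt_right (hcc.intervalIntegrable t t)
        hcc.stronglyMeasurable.stronglyMeasurableAtFilter hcc.continuousAt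
    have hD : HasDerivAt (fun s => B s x k) (-(c * curl3 (E0 t) x k)) t := by
      rw [hfun]
      have h2 := ((hI.const_add (∫ τ in Set.Iic t, curl3 (E0 τ) x k)).const_mul c).const_sub
        (Bs x k)
      simpa using h2
    exact hD.deriv
  -- Goal 3 : Faraday's law
  have hcurlE : curl3 (E t) x = -(1/c) • dt B t x := by
    funext k
    have hrhs : (-(1/c) • dt B t x) k = curl3 (E0 t) x k := by
      rw [Pi.smul_apply, hdtB k, smul_eq_mul]
      field_simp
    rw [hrhs]
    have hEs0 := hEscurl x
    fin_cases k
    · show pd 1 (fun y => E t y 2) x - pd 2 (fun y => E t y 1) x = _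
      rw [hEcomp t 2, hEcomp t 1, pd_add 1 (hE0k t 2 x) (hEsk 2 x),
        pd_add 2 (hE0k t 1 x) (hEsk 1 x)]
      have h1 : pd 1 (fun y => Es y 2) x - pd 2 (fun y => Es y 1) x = 0 := by
        have := congrFun hEs0 0
        simpa [curl3] using this
      show _ = pd 1 (fun y => E0 t y 2) x - pd 2 (fun y => E0 t y 1) x
      linarith
    · show pd 2 (fun y => E t y 0) x - pd 0 (fun y => E t y 2) x = _
      rw [hEcomp t 0, hEcomp t 2, pd_add 2 (hE0k t 0 x) (hEsk 0 x),
        pd_add 0 (hE0k t 2 x) (hEsk 2 x)]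
      have h1 : pd 2 (fun y => Es y 0) x - pd 0 (fun y => Es y 2) x = 0 := by
        have := congrFun hEs0 1
        simpa [curl3] using this
      show _ = pd 2 (fun y => E0 t y 0) x - pd 0 (fun y => E0 t y 2) x
      linarith
    · show pd 0 (fun y => E t y 1) x - pd 1 (fun y => E t y 0) x = _
      rw [hEcomp t 1, hEcomp t 0, pd_add 0 (hE0k t 1 x) (hEsk 1 x),
        pd_add 1 (hE0k t 0 x) (hEsk 0 x)]
      have h1 : pd 0 (fun y => Es y 1) x - pd 1 (fun y => Es y 0) x = 0 := by
        have := congrFun hEs0 2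
        simpa [curl3] using this
      show _ = pd 0 (fun y => E0 t y 1) x - pd 1 (fun y => E0 t y 0) x
      linarith
  -- Goal 4 : Ampere's law
  have hcne : c ≠ 0 := ne_of_gt hc
  have hRHS : ∀ k : Fin 3, ((1/c) • dt E t x + ((4 * Real.pi)/c) • ja t x) k
      = (1/c) * dt E0 t x k + ((4 * Real.pi)/c) * js x k := by
    intro k
    rw [Pi.add_apply, Pi.smul_apply, Pi.smul_apply, smul_eq_mul, smul_eq_mul, hdtE k, hja]
  have hBsc := hBscurl x
  have hwavek : ∀ (τ : ℝ) (k : Fin 3), (1/c^2) * dt2 E0 τ x k = vlap3 (E0 τ) x k := by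
    intro τ k
    have := congrFun (hE0wave τ x) k
    simpa [Pi.smul_apply, smul_eq_mul] using this
  have hAmp : curl3 (B t) x = (1/c) • dt E t x + ((4 * Real.pi)/c) • ja t x := by
    funext k
    rw [hRHS k]
    fin_cases k
    · have p1 := hpdB 1 0 1 1 0 2 hck2
      have p2 := hpdB 2 2 0 0 2 1 hck1
      have ia := int_QQ hsm hintm ht 0 1 1 0 1 x
      have ib := int_QQ hsm hintm ht 2 0 0 2 2 x
      have hW : ∀ τ : ℝ, (QQ E0 1 0 1 τ x - QQ E0 1 1 0 τ x)
          - (QQ E0 2 2 0 τ x - QQ E0 2 0 2 τ x) = -(1/c^2) * dt2 E0 τ x 0 := by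
        intro τ
        have s1 := QQ_symm hsm 1 0 1 τ x
        have s2 := QQ_symm hsm 2 0 2 τ x
        have d0 := divQQ hsm hE0div 0 τ x
        have l0 := lapQQ hsm 0 τ x
        have w0 := hwavek τ 0
        linarith
      have hIW : (∫ τ in Set.Iic t, (QQ E0 1 0 1 τ x - QQ E0 1 1 0 τ x))
          - (∫ τ in Set.Iic t, (QQ E0 2 2 0 τ x - QQ E0 2 0 2 τ x))
          = -(1/c^2) * dt E0 t x 0 := by
        rw [← integral_sub ia ib]
        calc ∫ τ in Set.Iic t, ((QQ E0 1 0 1 τ x - QQ E0 1 1 0 τ x)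
              - (QQ E0 2 2 0 τ x - QQ E0 2 0 2 τ x))
            = ∫ τ in Set.Iic t, (-(1/c^2) * dt2 E0 τ x 0) :=
              integral_congr_ae (Filter.Eventually.of_forall fun τ => hW τ)
          _ = -(1/c^2) * ∫ τ in Set.Iic t, dt2 E0 τ x 0 := integral_const_mul _ _
          _ = -(1/c^2) * dt E0 t x 0 := by rw [ftc hsm hintm hE0dt ht x 0]
      have hBsc0 : pd 1 (fun y => Bs y 2) x - pd 2 (fun y => Bs y 1) x
          = ((4 * Real.pi)/c) * js x 0 := by
        have := congrFun hBsc 0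
        simpa [curl3] using this
      show pd 1 (fun y => B t y 2) x - pd 2 (fun y => B t y 1) x
          = (1/c) * dt E0 t x 0 + ((4 * Real.pi)/c) * js x 0
      rw [p1, p2]
      have hexp : pd 1 (fun y => Bs y 2) x
            - c * (∫ τ in Set.Iic t, (QQ E0 1 0 1 τ x - QQ E0 1 1 0 τ x))
            - (pd 2 (fun y => Bs y 1) x
              - c * (∫ τ in Set.Iic t, (QQ E0 2 2 0 τ x - QQ E0 2 0 2 τ x)))
          = (pd 1 (fun y => Bs y 2) x - pd 2 (fun y => Bs y 1) x)
            - c * ((∫ τ in Set.Iic t, (QQ E0 1 0 1 τ x - QQ E0 1 1 0 τ x))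
              - (∫ τ in Set.Iic t, (QQ E0 2 2 0 τ x - QQ E0 2 0 2 τ x))) := by ring
      rw [hexp, hIW, hBsc0]
      field_simp
      ring
    · have p1 := hpdB 2 1 2 2 1 0 hck0
      have p2 := hpdB 0 0 1 1 0 2 hck2
      have ia := int_QQ hsm hintm ht 1 2 2 1 2 x
      have ib := int_QQ hsm hintm ht 0 1 1 0 0 x
      have hW : ∀ τ : ℝ, (QQ E0 2 1 2 τ x - QQ E0 2 2 1 τ x)
          - (QQ E0 0 0 1 τ x - QQ E0 0 1 0 τ x) = -(1/c^2) * dt2 E0 τ x 1 := by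
        intro τ
        have s1 := QQ_symm hsm 2 1 2 τ x
        have s2 := QQ_symm hsm 0 1 0 τ x
        have d1 := divQQ hsm hE0div 1 τ x
        have l1 := lapQQ hsm 1 τ x
        have w1 := hwavek τ 1
        linarith
      have hIW : (∫ τ in Set.Iic t, (QQ E0 2 1 2 τ x - QQ E0 2 2 1 τ x))
          - (∫ τ in Set.Iic t, (QQ E0 0 0 1 τ x - QQ E0 0 1 0 τ x))
          = -(1/c^2) * dt E0 t x 1 := by
        rw [← integral_sub ia ib]
        calc ∫ τ in Set.Iic t, ((QQ E0 2 1 2 τ x - QQ E0 2 2 1 τ x)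
              - (QQ E0 0 0 1 τ x - QQ E0 0 1 0 τ x))
            = ∫ τ in Set.Iic t, (-(1/c^2) * dt2 E0 τ x 1) :=
              integral_congr_ae (Filter.Eventually.of_forall fun τ => hW τ)
          _ = -(1/c^2) * ∫ τ in Set.Iic t, dt2 E0 τ x 1 := integral_const_mul _ _
          _ = -(1/c^2) * dt E0 t x 1 := by rw [ftc hsm hintm hE0dt ht x 1]
      have hBsc1 : pd 2 (fun y => Bs y 0) x - pd 0 (fun y => Bs y 2) x
          = ((4 * Real.pi)/c) * js x 1 := by
        have := congrFun hBsc 1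
        simpa [curl3] using this
      show pd 2 (fun y => B t y 0) x - pd 0 (fun y => B t y 2) x
          = (1/c) * dt E0 t x 1 + ((4 * Real.pi)/c) * js x 1
      rw [p1, p2]
      have hexp : pd 2 (fun y => Bs y 0) x
            - c * (∫ τ in Set.Iic t, (QQ E0 2 1 2 τ x - QQ E0 2 2 1 τ x))
            - (pd 0 (fun y => Bs y 2) x
              - c * (∫ τ in Set.Iic t, (QQ E0 0 0 1 τ x - QQ E0 0 1 0 τ x)))
          = (pd 2 (fun y => Bs y 0) x - pd 0 (fun y => Bs y 2) x)
            - c * ((∫ τ in Set.Iic t, (QQ E0 2 1 2 τ x - QQ E0 2 2 1 τ x))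
              - (∫ τ in Set.Iic t, (QQ E0 0 0 1 τ x - QQ E0 0 1 0 τ x))) := by ring
      rw [hexp, hIW, hBsc1]
      field_simp
      ring
    · have p1 := hpdB 0 2 0 0 2 1 hck1
      have p2 := hpdB 1 1 2 2 1 0 hck0
      have ia := int_QQ hsm hintm ht 2 0 0 2 0 x
      have ib := int_QQ hsm hintm ht 1 2 2 1 1 x
      have hW : ∀ τ : ℝ, (QQ E0 0 2 0 τ x - QQ E0 0 0 2 τ x)
          - (QQ E0 1 1 2 τ x - QQ E0 1 2 1 τ x) = -(1/c^2) * dt2 E0 τ x 2 := by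
        intro τ
        have s1 := QQ_symm hsm 0 2 0 τ x
        have s2 := QQ_symm hsm 1 2 1 τ x
        have d2 := divQQ hsm hE0div 2 τ x
        have l2 := lapQQ hsm 2 τ x
        have w2 := hwavek τ 2
        linarith
      have hIW : (∫ τ in Set.Iic t, (QQ E0 0 2 0 τ x - QQ E0 0 0 2 τ x))
          - (∫ τ in Set.Iic t, (QQ E0 1 1 2 τ x - QQ E0 1 2 1 τ x))
          = -(1/c^2) * dt E0 t x 2 := by
        rw [← integral_sub ia ib]
        calc ∫ τ in Set.Iic t, ((QQ E0 0 2 0 τ x - QQ E0 0 0 2 τ x)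
              - (QQ E0 1 1 2 τ x - QQ E0 1 2 1 τ x))
            = ∫ τ in Set.Iic t, (-(1/c^2) * dt2 E0 τ x 2) :=
              integral_congr_ae (Filter.Eventually.of_forall fun τ => hW τ)
          _ = -(1/c^2) * ∫ τ in Set.Iic t, dt2 E0 τ x 2 := integral_const_mul _ _
          _ = -(1/c^2) * dt E0 t x 2 := by rw [ftc hsm hintm hE0dt ht x 2]
      have hBsc2 : pd 0 (fun y => Bs y 1) x - pd 1 (fun y => Bs y 0) x
          = ((4 * Real.pi)/c) * js x 2 := by
        have := congrFun hBsc 2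
        simpa [curl3] using this
      show pd 0 (fun y => B t y 1) x - pd 1 (fun y => B t y 0) x
          = (1/c) * dt E0 t x 2 + ((4 * Real.pi)/c) * js x 2
      rw [p1, p2]
      have hexp : pd 0 (fun y => Bs y 1) x
            - c * (∫ τ in Set.Iic t, (QQ E0 0 2 0 τ x - QQ E0 0 0 2 τ x))
            - (pd 1 (fun y => Bs y 0) x
              - c * (∫ τ in Set.Iic t, (QQ E0 1 1 2 τ x - QQ E0 1 2 1 τ x)))
          = (pd 0 (fun y => Bs y 1) x - pd 1 (fun y => Bs y 0) x)
            - c * ((∫ τ in Set.Iic t, (QQ E0 0 2 0 τ x - QQ E0 0 0 2 τ x))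
              - (∫ τ in Set.Iic t, (QQ E0 1 1 2 τ x - QQ E0 1 2 1 τ x))) := by ring
      rw [hexp, hIW, hBsc2]
      field_simp
      ring
  exact ⟨hdivE, hdivB, hcurlE, hAmp⟩
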